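/- Let $F : M_F(E) \to \mathbb{R}$ be continuous on the space of finite measures on a compact metric space $E$, with directional derivative $D_x F(\mu) = \lim_{\varepsilon \to 0}(F(\mu + \varepsilon \delta_x) - F(\mu))/\varepsilon$ existing and jointly continuous and bounded in $(x, \mu)$. Then for every $\mu \in M_F(E)$: $F(\mu) = F(0) + \int_0^1 \int_E D_x F(\theta \mu)\, \mu(dx)\, d\theta$. -/

import Mathlib

/-!
Say that `DF` is a directional derivative of `F` along `ν` if
`(F (m + ε • ν) - F m) / ε → ∫ DF x m ∂ν` as `ε ↓ 0`, for every `m`. This holds along Dirac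
masses by hypothesis, and survives scaling and sums: along `ν₁ + ν₂` the difference quotient
splits into one along `ν₁` at `m` and one along `ν₂` at the moving base point `m + ε • ν₁`, which
the fundamental theorem of calculus writes as an average of `∫ DF x (·) ∂ν₂` over a segment
shrinking to `m`. For finite combinations `ν` of Dirac masses the fundamental theorem of calculus
applied to `θ ↦ F (θ • ν)` is then the formula. Both sides are weakly continuous in `ν`, and such
combinations are weakly dense (push `μ` forward along simple functions converging to the
identity), so the formula holds for every `μ`.
-/

open MeasureTheory Filter Set

/-- The Dirac measure at `x`, as a finite measure. -/
noncomputable def diracFM {E : Type*} [MeasurableSpace E] (x : E) : FiniteMeasure E :=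
  ⟨MeasureTheory.Measure.dirac x, inferInstance⟩

open Topology
open scoped NNReal BoundedContinuousFunction

@[simp]
theorem toMeasure_diracFM {E : Type*} [MeasurableSpace E] (x : E) :
    (diracFM x : Measure E) = Measure.dirac x := rfl

theorem tendsto_toNNReal_sub_nhdsGT (t : ℝ) :
    Tendsto (fun s : ℝ => (s - t).toNNReal) (𝓝[>] t) (𝓝[>] 0) := by
  refine tendsto_nhdsWithin_iff.2 ⟨?_, eventually_nhdsWithin_of_forall fun s hs => ?_⟩
  · have : Continuous fun s : ℝ => (s - t).toNNReal := by fun_prop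
    simpa using (this.tendsto t).mono_left nhdsWithin_le_nhds
  · simpa using hs

namespace MeasureTheory.FiniteMeasure

theorem measureReal_univ_eq_mass {Ω : Type*} [MeasurableSpace Ω] (ρ : FiniteMeasure Ω) :
    (ρ : Measure Ω).real univ = ρ.mass := by
  simp [measureReal_def, ← ennreal_mass]

section Topological

variable {Ω : Type*} [TopologicalSpace Ω] [MeasurableSpace Ω] [OpensMeasurableSpace Ω]

theorem continuous_integral_prod :
    Continuous fun p : (Ω →ᵇ ℝ) × FiniteMeasure Ω => ∫ ω, p.1 ω ∂(p.2 : Measure Ω) := by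
  refine continuous_iff_continuousAt.2 fun ⟨f₀, ρ₀⟩ => ?_
  have h_fixed : Tendsto (fun p : (Ω →ᵇ ℝ) × FiniteMeasure Ω => ∫ ω, f₀ ω ∂(p.2 : Measure Ω))
      (𝓝 (f₀, ρ₀)) (𝓝 (∫ ω, f₀ ω ∂(ρ₀ : Measure Ω))) :=
    (continuous_integral_boundedContinuousFunction f₀).continuousAt.comp
      continuous_snd.continuousAt
  have h_small : Tendsto
      (fun p : (Ω →ᵇ ℝ) × FiniteMeasure Ω => ∫ ω, (p.1 - f₀) ω ∂(p.2 : Measure Ω))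
      (𝓝 (f₀, ρ₀)) (𝓝 0) := by
    refine squeeze_zero_norm (fun p => ((p.1 - f₀).norm_integral_le_mul_norm _).trans_eq
      (by rw [measureReal_univ_eq_mass])) ?_
    have : Continuous fun p : (Ω →ᵇ ℝ) × FiniteMeasure Ω => (p.2.mass : ℝ) * ‖p.1 - f₀‖ := by
      fun_prop
    simpa using this.tendsto (f₀, ρ₀)
  have h_sum := h_small.add h_fixed
  rw [zero_add] at h_sum
  refine h_sum.congr fun p => ?_
  rw [← integral_add ((p.1 - f₀).integrable _) (f₀.integrable _)]
  simp

theorem continuous_integral_of_continuous_uncurry [CompactSpace Ω] {X : Type*}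
    [TopologicalSpace X] {g : Ω → X → ℝ} (hg : Continuous (Function.uncurry g)) :
    Continuous fun p : X × FiniteMeasure Ω => ∫ ω, g ω p.1 ∂(p.2 : Measure Ω) := by
  let G : C(X, C(Ω, ℝ)) :=
    ContinuousMap.curry ⟨fun q : X × Ω => g q.2 q.1, hg.comp continuous_swap⟩
  have hG : Continuous fun a => ContinuousMap.isometryEquivBoundedOfCompact Ω ℝ (G a) :=
    (ContinuousMap.isometryEquivBoundedOfCompact Ω ℝ).continuous.comp G.continuous
  exact continuous_integral_prod.comp (hG.prodMap continuous_id)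

end Topological

theorem tendsto_map_of_tendsto {α β ι : Type*} [MeasurableSpace α] [MeasurableSpace β]
    [TopologicalSpace β] [OpensMeasurableSpace β] {L : Filter ι} [L.IsCountablyGenerated]
    (μ : FiniteMeasure α) {f : ι → α → β} {g : α → β} (hf : ∀ i, Measurable (f i))
    (hg : Measurable g) (hfg : ∀ x, Tendsto (fun i => f i x) L (𝓝 (g x))) :
    Tendsto (fun i => μ.map (f i)) L (𝓝 (μ.map g)) := by
  refine tendsto_iff_forall_integral_tendsto.2 fun φ => ?_
  have h_map : ∀ i, ∫ y, φ y ∂(μ : Measure α).map (f i) = ∫ x, φ (f i x) ∂(μ : Measure α) :=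
    fun i => integral_map (hf i).aemeasurable φ.continuous.aestronglyMeasurable
  simp only [toMeasure_map, h_map]
  rw [integral_map hg.aemeasurable φ.continuous.aestronglyMeasurable]
  exact tendsto_integral_filter_of_dominated_convergence (fun _ => ‖φ‖)
    (Eventually.of_forall fun i => (φ.continuous.measurable.comp (hf i)).aestronglyMeasurable)
    (Eventually.of_forall fun i => Eventually.of_forall fun x => φ.norm_coe_le_norm _)
    (integrable_const _) (Eventually.of_forall fun x => (φ.continuous.tendsto _).comp (hfg x))

theorem map_simpleFunc_eq_sum {α E : Type*} [MeasurableSpace α] [MeasurableSpace E]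
    (μ : FiniteMeasure α) (f : SimpleFunc α E) :
    μ.map f = ∑ y ∈ f.range, μ (f ⁻¹' {y}) • diracFM y := by
  classical
  ext s hs
  rw [toMeasure_map, Measure.map_apply f.measurable hs, toMeasure_sum, Measure.coe_finsetSum,
    Finset.sum_apply]
  have h_pre : f ⁻¹' s = f ⁻¹' ↑({y ∈ f.range | y ∈ s}) := by
    ext x
    simp
  rw [h_pre, ← f.sum_measure_preimage_singleton, Finset.sum_filter]
  refine Finset.sum_congr rfl fun y _ => ?_
  simp [Measure.dirac_apply' _ hs, indicator, ennreal_coeFn_eq_coeFn_toMeasure]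

end MeasureTheory.FiniteMeasure

def diracCone (E : Type*) [MeasurableSpace E] : AddSubmonoid (FiniteMeasure E) :=
  AddSubmonoid.closure (range fun p : ℝ≥0 × E => p.1 • diracFM p.2)

theorem dense_diracCone {E : Type*} [PseudoMetricSpace E] [TopologicalSpace.SeparableSpace E]
    [MeasurableSpace E] [OpensMeasurableSpace E] :
    Dense (diracCone E : Set (FiniteMeasure E)) := by
  intro μ
  rcases isEmpty_or_nonempty E with hE | ⟨⟨y₀⟩⟩
  · obtain rfl : μ = 0 := FiniteMeasure.toMeasure_injective (Subsingleton.elim _ _)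
    exact subset_closure (diracCone E).zero_mem
  let π := SimpleFunc.approxOn id measurable_id univ y₀ (mem_univ _)
  have h_lim : Tendsto (fun n => μ.map (π n)) atTop (𝓝 μ) := by
    have := μ.tendsto_map_of_tendsto (fun n => (π n).measurable) measurable_id
      fun x => SimpleFunc.tendsto_approxOn measurable_id (mem_univ y₀) (by simp)
    rwa [show μ.map id = μ from FiniteMeasure.toMeasure_injective (by simp)] at this
  refine mem_closure_of_tendsto h_lim (Eventually.of_forall fun n => ?_)
  rw [FiniteMeasure.map_simpleFunc_eq_sum]
  exact sum_mem fun y _ => AddSubmonoid.subset_closure ⟨(_, y), rfl⟩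

section DirectionalDerivative

variable {E : Type*} [MeasurableSpace E] {F : FiniteMeasure E → ℝ}
  {DF : E → FiniteMeasure E → ℝ} {ν ν₁ ν₂ : FiniteMeasure E}

def HasDirectionalDeriv (F : FiniteMeasure E → ℝ) (DF : E → FiniteMeasure E → ℝ)
    (ν : FiniteMeasure E) : Prop :=
  ∀ m, Tendsto (fun ε : ℝ≥0 => (F (m + ε • ν) - F m) / ε) (𝓝[>] 0)
    (𝓝 (∫ x, DF x m ∂(ν : Measure E)))

theorem hasDirectionalDeriv_zero : HasDirectionalDeriv F DF 0 := fun m => by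
  simp

theorem hasDirectionalDeriv_diracFM [MeasurableSingletonClass E] {x : E}
    (h : ∀ m, Tendsto (fun ε : ℝ≥0 => (F (m + ε • diracFM x) - F m) / ε) (𝓝[>] 0)
      (𝓝 (DF x m))) :
    HasDirectionalDeriv F DF (diracFM x) := by
  simpa [HasDirectionalDeriv] using h

theorem HasDirectionalDeriv.smul (h : HasDirectionalDeriv F DF ν) (c : ℝ≥0) :
    HasDirectionalDeriv F DF (c • ν) := by
  rcases eq_or_ne c 0 with rfl | hc
  · rw [zero_smul]
    exact hasDirectionalDeriv_zero
  intro m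
  have h_scale : Tendsto (fun ε : ℝ≥0 => ε * c) (𝓝[>] 0) (𝓝[>] 0) := by
    refine tendsto_nhdsWithin_iff.2 ⟨?_, eventually_nhdsWithin_of_forall fun ε hε => ?_⟩
    · simpa using ((continuous_mul_const c).tendsto 0).mono_left nhdsWithin_le_nhds
    · exact mul_pos hε (pos_iff_ne_zero.2 hc)
  rw [FiniteMeasure.toMeasure_smul, integral_smul_nnreal_measure, NNReal.smul_def, smul_eq_mul]
  refine (((h m).comp h_scale).const_mul (c : ℝ)).congr' ?_
  filter_upwards [self_mem_nhdsWithin] with ε hε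
  have : (ε : ℝ) ≠ 0 := by exact_mod_cast hε.ne'
  have : (c : ℝ) ≠ 0 := by exact_mod_cast hc
  simp only [Function.comp_apply, smul_smul, NNReal.coe_mul]
  field_simp

variable [TopologicalSpace E] [OpensMeasurableSpace E] [CompactSpace E]

theorem HasDirectionalDeriv.eq_add_intervalIntegral (hF : Continuous F)
    (hDF : Continuous (Function.uncurry DF)) (h : HasDirectionalDeriv F DF ν)
    (m : FiniteMeasure E) :
    F (m + ν) = F m + ∫ t in (0 : ℝ)..1, ∫ x, DF x (m + t.toNNReal • ν) ∂(ν : Measure E) := by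
  have h_path : Continuous fun t : ℝ => m + t.toNNReal • ν := by fun_prop
  have h_deriv_cont : Continuous fun t : ℝ => ∫ x, DF x (m + t.toNNReal • ν) ∂(ν : Measure E) :=
    (FiniteMeasure.continuous_integral_of_continuous_uncurry hDF).comp
      (h_path.prodMk continuous_const)
  have h_deriv : ∀ t ∈ Ioo (0 : ℝ) 1, HasDerivWithinAt (fun t : ℝ => F (m + t.toNNReal • ν))
      (∫ x, DF x (m + t.toNNReal • ν) ∂(ν : Measure E)) (Ioi t) t := by
    intro t ht
    rw [hasDerivWithinAt_iff_tendsto_slope, sdiff_singleton_eq_self self_notMem_Ioi]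
    refine ((h _).comp (tendsto_toNNReal_sub_nhdsGT t)).congr' ?_
    filter_upwards [self_mem_nhdsWithin] with s hs
    have hst : 0 ≤ s - t := (sub_pos.2 hs).le
    have h_split : s.toNNReal = t.toNNReal + (s - t).toNNReal := by
      rw [← Real.toNNReal_add ht.1.le hst, add_sub_cancel]
    simp [slope_def_field, h_split, add_smul, add_assoc, Real.coe_toNNReal _ hst]
  have h_ftc := intervalIntegral.integral_eq_sub_of_hasDeriv_right_of_le zero_le_one
    (hF.comp h_path).continuousOn h_deriv (h_deriv_cont.intervalIntegrable 0 1)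
  simp only [Function.comp_apply, Real.toNNReal_one, one_smul, Real.toNNReal_zero, zero_smul,
    add_zero] at h_ftc
  linarith

theorem HasDirectionalDeriv.add (hF : Continuous F) (hDF : Continuous (Function.uncurry DF))
    (h₁ : HasDirectionalDeriv F DF ν₁) (h₂ : HasDirectionalDeriv F DF ν₂) :
    HasDirectionalDeriv F DF (ν₁ + ν₂) := by
  intro m
  let G : ℝ≥0 → ℝ := fun ε =>
    ∫ t in (0 : ℝ)..1, ∫ x, DF x (m + ε • ν₁ + t.toNNReal • ε • ν₂) ∂(ν₂ : Measure E)
  have hG : Continuous G :=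
    intervalIntegral.continuous_parametric_intervalIntegral_of_continuous'
      (f := fun (ε : ℝ≥0) (t : ℝ) =>
        ∫ x, DF x (m + ε • ν₁ + t.toNNReal • ε • ν₂) ∂(ν₂ : Measure E))
      ((FiniteMeasure.continuous_integral_of_continuous_uncurry hDF).comp
        (by fun_prop : Continuous fun p : ℝ≥0 × ℝ => (m + p.1 • ν₁ + p.2.toNNReal • p.1 • ν₂, ν₂)))
      0 1
  have hG₀ : G 0 = ∫ x, DF x m ∂(ν₂ : Measure E) := by simp [G]
  have h_quot : ∀ ε : ℝ≥0, ε ≠ 0 →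
      (F (m + ε • ν₁ + ε • ν₂) - F (m + ε • ν₁)) / ε = G ε := by
    intro ε hε
    have : (ε : ℝ) ≠ 0 := by exact_mod_cast hε
    rw [(h₂.smul ε).eq_add_intervalIntegral hF hDF]
    simp only [FiniteMeasure.toMeasure_smul, integral_smul_nnreal_measure, NNReal.smul_def,
      smul_eq_mul, intervalIntegral.integral_const_mul, G]
    field_simp
    ring
  have h_int : ∀ ρ : FiniteMeasure E, Integrable (fun x => DF x m) (ρ : Measure E) := fun ρ =>
    (hDF.uncurry_right m).integrable_of_hasCompactSupport (.of_compactSpace _)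
  have h_lim := (h₁ m).add ((hG.tendsto 0).mono_left nhdsWithin_le_nhds)
  rw [hG₀, ← integral_add_measure (h_int ν₁) (h_int ν₂)] at h_lim
  refine h_lim.congr' ?_
  filter_upwards [self_mem_nhdsWithin] with ε hε
  rw [← h_quot ε hε.ne', smul_add, ← add_assoc]
  ring

theorem hasDirectionalDeriv_of_mem_diracCone [MeasurableSingletonClass E] (hF : Continuous F)
    (hDF : Continuous (Function.uncurry DF))
    (hderiv : ∀ x m, Tendsto (fun ε : ℝ≥0 => (F (m + ε • diracFM x) - F m) / ε) (𝓝[>] 0)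
      (𝓝 (DF x m)))
    (hν : ν ∈ diracCone E) : HasDirectionalDeriv F DF ν := by
  induction hν using AddSubmonoid.closure_induction with
  | mem _ h =>
    obtain ⟨⟨c, x⟩, rfl⟩ := h
    exact (hasDirectionalDeriv_diracFM (hderiv x)).smul c
  | zero => exact hasDirectionalDeriv_zero
  | add _ _ _ _ h₁ h₂ => exact h₁.add hF hDF h₂

theorem continuous_intervalIntegral_integral_smul (hDF : Continuous (Function.uncurry DF)) :
    Continuous fun ν : FiniteMeasure E =>
      ∫ t in (0 : ℝ)..1, ∫ x, DF x (t.toNNReal • ν) ∂(ν : Measure E) :=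
  intervalIntegral.continuous_parametric_intervalIntegral_of_continuous'
    (f := fun (ν : FiniteMeasure E) (t : ℝ) => ∫ x, DF x (t.toNNReal • ν) ∂(ν : Measure E))
    ((FiniteMeasure.continuous_integral_of_continuous_uncurry hDF).comp
      (by fun_prop : Continuous fun p : FiniteMeasure E × ℝ => (p.2.toNNReal • p.1, p.1)))
    0 1

end DirectionalDerivative

theorem stmt_14_general {E : Type*} [MetricSpace E] [CompactSpace E]
    [MeasurableSpace E] [BorelSpace E]
    (F : FiniteMeasure E → ℝ) (DF : E → FiniteMeasure E → ℝ)
    (hF : Continuous F)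
    (hderiv : ∀ (x : E) (μ : FiniteMeasure E),
      Tendsto (fun ε : NNReal => (F (μ + ε • diracFM x) - F μ) / (ε : ℝ))
        (nhdsWithin 0 (Ioi 0)) (nhds (DF x μ)))
    (hDFcont : Continuous (fun p : E × FiniteMeasure E => DF p.1 p.2))
    (μ : FiniteMeasure E) :
    F μ = F 0 + ∫ θ in Icc (0 : ℝ) 1, (∫ x, DF x (θ.toNNReal • μ) ∂(μ.toMeasure)) := by
  let formulaHolds : Set (FiniteMeasure E) :=
    {ν | F ν = F 0 + ∫ t in (0 : ℝ)..1, ∫ x, DF x (t.toNNReal • ν) ∂(ν : Measure E)}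
  have h_closed : IsClosed formulaHolds :=
    isClosed_eq hF (continuous_const.add (continuous_intervalIntegral_integral_smul hDFcont))
  have h_cone : (diracCone E : Set (FiniteMeasure E)) ⊆ formulaHolds := fun ν hν => by
    simpa [formulaHolds] using
      (hasDirectionalDeriv_of_mem_diracCone hF hDFcont hderiv hν).eq_add_intervalIntegral hF hDFcont 0
  have h_all : μ ∈ formulaHolds := by
    rw [← h_closed.closure_eq, (dense_diracCone.mono h_cone).closure_eq]
    exact mem_univ μ
  rw [integral_Icc_eq_integral_Ioc, ← intervalIntegral.integral_of_le zero_le_one]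
  exact h_all

/-- Jacka–Tribe integral representation: if `F` is continuous on `M_F(E)` with a jointly
continuous and bounded directional derivative `D_x F`, then
`F(μ) = F(0) + ∫₀¹ ∫_E D_x F(θμ) μ(dx) dθ`. -/
theorem stmt_14 {E : Type*} [MetricSpace E] [CompactSpace E]
    [MeasurableSpace E] [BorelSpace E]
    (F : FiniteMeasure E → ℝ) (DF : E → FiniteMeasure E → ℝ)
    (hF : Continuous F)
    (hderiv : ∀ (x : E) (μ : FiniteMeasure E),
      Tendsto (fun ε : NNReal => (F (μ + ε • diracFM x) - F μ) / (ε : ℝ))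
        (nhdsWithin 0 (Ioi 0)) (nhds (DF x μ)))
    (hDFcont : Continuous (fun p : E × FiniteMeasure E => DF p.1 p.2))
    (hDFbdd : ∃ C : ℝ, ∀ (x : E) (μ : FiniteMeasure E), |DF x μ| ≤ C)
    (μ : FiniteMeasure E) :
    F μ = F 0 + ∫ θ in Icc (0 : ℝ) 1, (∫ x, DF x (θ.toNNReal • μ) ∂(μ.toMeasure)) :=
  stmt_14_general F DF hF hderiv hDFcont μ
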